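/- arXiv:2005.05400 — 6 statements merged into one kernel-verified Lean document; each statement's English description precedes it below -/
import Mathlib

section
/- Let c > s > 0, let x : ℝ → ℝ be uniformly Lipschitz continuous with Lipschitz constant s, fix t ∈ ℝ, and let τ ≥ 0 satisfy c·τ = |x(t) + x(t - τ)|. Writing x̃ = x(t-τ): if x(t) ≥ 0 then x(t) + x̃ ≥ 0, and if x(t) ≤ 0 then x(t) + x̃ ≤ 0. In particular sign(x(t) + x̃) = sign(x(t)) whenever x(t) ≠ 0. -/
/-!
The Lipschitz bound gives |x(t) - x̃| ≤ s·τ, and since s < c this is at most c·τ = |x(t) + x̃|,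
strictly so when τ > 0. Now |x(t) - x̃| < |x(t) + x̃| says exactly that x(t)·x̃ > 0, while τ = 0
forces x(t) = x̃ and x(t) + x̃ = 0. So x(t) and x̃ are either both zero or of the same strict sign.
-/

theorem zero_and_zero_or_mul_pos_of_abs_sub_le_of_mul_eq_abs_add {a y s c τ : ℝ} (hsc : s < c)
    (hτ0 : 0 ≤ τ) (hlip : |a - y| ≤ s * τ) (hτ : c * τ = |a + y|) :
    (a = 0 ∧ y = 0) ∨ 0 < a * y := by
  rcases hτ0.eq_or_lt with rfl | hτpos
  · left
    have hdiff : a - y = 0 := abs_nonpos_iff.mp (by simpa using hlip)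
    have hsum : a + y = 0 := abs_eq_zero.mp (by simpa using hτ.symm)
    constructor <;> linarith
  · right
    have hlt : |a - y| < |a + y| := hτ ▸ hlip.trans_lt (mul_lt_mul_of_pos_right hsc hτpos)
    have hsq : (a - y) ^ 2 < (a + y) ^ 2 := sq_lt_sq.mpr hlt
    nlinarith

theorem stmt_6_general (c s t : ℝ) (hsc : s < c)
    (x : ℝ → ℝ)
    (hlip : ∀ a b : ℝ, |x a - x b| ≤ s * |a - b|)
    (τ : ℝ) (hτ0 : 0 ≤ τ) (hτ : c * τ = |x t + x (t - τ)|) :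
    (0 ≤ x t → 0 ≤ x t + x (t - τ)) ∧
      (x t ≤ 0 → x t + x (t - τ) ≤ 0) ∧
      (x t ≠ 0 → Real.sign (x t + x (t - τ)) = Real.sign (x t)) := by
  have hlipτ : |x t - x (t - τ)| ≤ s * τ := by
    simpa [abs_of_nonneg hτ0] using hlip t (t - τ)
  rcases zero_and_zero_or_mul_pos_of_abs_sub_le_of_mul_eq_abs_add hsc hτ0 hlipτ hτ with
    ⟨hxt, hxd⟩ | hmul
  · simp [hxt, hxd]
  rcases pos_and_pos_or_neg_and_neg_of_mul_pos hmul with ⟨hxt, hxd⟩ | ⟨hxt, hxd⟩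
  · refine ⟨fun _ => by linarith, fun h => absurd h hxt.not_ge, fun _ => ?_⟩
    rw [Real.sign_of_pos (add_pos hxt hxd), Real.sign_of_pos hxt]
  · refine ⟨fun h => absurd h hxt.not_ge, fun _ => by linarith, fun _ => ?_⟩
    rw [Real.sign_of_neg (add_neg hxt hxd), Real.sign_of_neg hxt]

/-- Sign preservation in the symmetric two-agent delayed model: with
c·τ = |x(t) + x(t-τ)|, x uniformly s-Lipschitz, s < c, the quantity x(t) + x(t-τ)
has the same sign as x(t). -/
theorem stmt_6 (c s t : ℝ) (hs : 0 < s) (hsc : s < c)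
    (x : ℝ → ℝ)
    (hlip : ∀ a b : ℝ, |x a - x b| ≤ s * |a - b|)
    (τ : ℝ) (hτ0 : 0 ≤ τ) (hτ : c * τ = |x t + x (t - τ)|) :
    (0 ≤ x t → 0 ≤ x t + x (t - τ)) ∧
      (x t ≤ 0 → x t + x (t - τ) ≤ 0) ∧
      (x t ≠ 0 → Real.sign (x t + x (t - τ)) = Real.sign (x t)) :=
  stmt_6_general c s t hsc x hlip τ hτ0 hτ
end

section
/- Let c > s > 0, let ψ : [0,∞) → [0,∞) satisfy sup_{r>0} ψ(r)·r ≤ s, and let x : [-S⁰, T] → ℝ be a differentiable solution on (0,T) of ẋ(t) = -ψ(|x(t) + x(t-τ(t))|)·(x(t) + x(t-τ(t))), where for each t the delay τ(t) ≥ 0 solves c·τ(t) = |x(t) + x(t-τ(t))|, and x is uniformly Lipschitz with constant s on [-S⁰, T]. Then the function t ↦ x(t)² is non-increasing on [0,T]; in particular |x(t)| ≤ |x(0)| for all t ∈ [0,T]. -/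
/-!
Since `c τ(t) = |x(t) + x(t - τ(t))|` and `x` is `s`-Lipschitz with `s ≤ c`, the increment
`|x(t) - x(t - τ(t))| ≤ s τ(t)` never exceeds `|x(t) + x(t - τ(t))|`; hence
`x(t) + x(t - τ(t))` has the sign of `x(t)`, and `d/dt x² = -2 ψ(|x + x̃|) (x + x̃) x ≤ 0`.
-/

open Set

theorem zero_le_add_mul_of_abs_sub_le_abs_add {u v : ℝ} (h : |u - v| ≤ |u + v|) :
    0 ≤ (u + v) * u := by
  -- `2 (u + v) u = (u + v)² + (u + v)(u - v)`, and the second term is at least `-|u + v|²`.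
  have hprod : |(u + v) * (u - v)| ≤ |u + v| * |u + v| := by
    rw [abs_mul]
    exact mul_le_mul_of_nonneg_left h (abs_nonneg _)
  rw [abs_mul_abs_self] at hprod
  nlinarith [neg_abs_le ((u + v) * (u - v))]

theorem zero_le_add_mul_of_delay {s c δ u v : ℝ} (hsc : s ≤ c) (hδ : 0 ≤ δ)
    (hlip : |u - v| ≤ s * δ) (hdelay : c * δ = |u + v|) : 0 ≤ (u + v) * u :=
  zero_le_add_mul_of_abs_sub_le_abs_add <| calc
    |u - v| ≤ s * δ := hlip
    _ ≤ c * δ := mul_le_mul_of_nonneg_right hsc hδ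
    _ = |u + v| := hdelay

theorem antitoneOn_sq_of_hasDerivAt {f f' : ℝ → ℝ} {a b : ℝ} (hf : ContinuousOn f (Icc a b))
    (hderiv : ∀ t ∈ Ioo a b, HasDerivAt f (f' t) t)
    (hsign : ∀ t ∈ Ioo a b, f' t * f t ≤ 0) :
    AntitoneOn (fun t => f t ^ 2) (Icc a b) := by
  refine antitoneOn_of_hasDerivWithinAt_nonpos (f' := fun t => 2 * f t * f' t)
    (convex_Icc a b) (hf.pow 2) (fun t ht => ?_) (fun t ht => ?_) <;> rw [interior_Icc] at ht
  · simpa using ((hderiv t ht).fun_pow 2).hasDerivWithinAt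
  · nlinarith [hsign t ht]

theorem stmt_7_general (c s S0 T : ℝ) (hs : 0 < s) (hsc : s < c) (hS0 : 0 ≤ S0)
    (ψ : ℝ → ℝ) (hψnn : ∀ r : ℝ, 0 ≤ r → 0 ≤ ψ r)
    (x : ℝ → ℝ) (τ : ℝ → ℝ)
    (hτ0 : ∀ t ∈ Set.Icc (0 : ℝ) T, 0 ≤ τ t)
    (hdom : ∀ t ∈ Set.Icc (0 : ℝ) T, -S0 ≤ t - τ t)
    (hτ : ∀ t ∈ Set.Icc (0 : ℝ) T, c * τ t = |x t + x (t - τ t)|)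
    (hode : ∀ t ∈ Set.Ioo (0 : ℝ) T,
      HasDerivAt x (-(ψ (|x t + x (t - τ t)|) * (x t + x (t - τ t)))) t)
    (hlip : ∀ a b, a ∈ Set.Icc (-S0) T → b ∈ Set.Icc (-S0) T →
      |x a - x b| ≤ s * |a - b|) :
    AntitoneOn (fun t => x t ^ 2) (Set.Icc 0 T) ∧
      ∀ t ∈ Set.Icc (0 : ℝ) T, |x t| ≤ |x 0| := by
  have hIcc : Icc 0 T ⊆ Icc (-S0) T := Icc_subset_Icc (by linarith) le_rfl
  have hcont : ContinuousOn x (Icc 0 T) :=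
    (LipschitzOnWith.of_dist_le_mul (K := ⟨s, hs.le⟩) fun a ha b hb =>
      hlip a b ha hb).continuousOn.mono hIcc
  have hsum_mul : ∀ t ∈ Icc 0 T, 0 ≤ (x t + x (t - τ t)) * x t := fun t ht =>
    zero_le_add_mul_of_delay hsc.le (hτ0 t ht)
      (by simpa [abs_of_nonneg (hτ0 t ht)] using
        hlip t (t - τ t) (hIcc ht) ⟨hdom t ht, by linarith [hτ0 t ht, ht.2]⟩)
      (hτ t ht)
  have hanti : AntitoneOn (fun t => x t ^ 2) (Icc 0 T) :=
    antitoneOn_sq_of_hasDerivAt hcont hode fun t ht => by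
      have := mul_nonneg (hψnn _ (abs_nonneg (x t + x (t - τ t))))
        (hsum_mul t (Ioo_subset_Icc_self ht))
      linarith
  refine ⟨hanti, fun t ht => sq_le_sq.mp ?_⟩
  exact hanti ⟨le_rfl, ht.1.trans ht.2⟩ ht ht.1

/-- For the symmetric two-agent Hegselmann-Krause model with state-dependent delay,
ẋ = -ψ(|x + x̃|)(x + x̃) with c·τ(t) = |x(t) + x(t-τ(t))|, sup ψ(r)r ≤ s < c and
x uniformly s-Lipschitz on [-S⁰,T], the squared modulus t ↦ x(t)² is non-increasing
on [0,T]; in particular |x(t)| ≤ |x(0)|. -/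
theorem stmt_7 (c s S0 T : ℝ) (hs : 0 < s) (hsc : s < c) (hS0 : 0 ≤ S0) (hT : 0 < T)
    (ψ : ℝ → ℝ) (hψnn : ∀ r : ℝ, 0 ≤ r → 0 ≤ ψ r)
    (hψs : ∀ r : ℝ, 0 < r → ψ r * r ≤ s)
    (x : ℝ → ℝ) (τ : ℝ → ℝ)
    (hτ0 : ∀ t ∈ Set.Icc (0 : ℝ) T, 0 ≤ τ t)
    (hdom : ∀ t ∈ Set.Icc (0 : ℝ) T, -S0 ≤ t - τ t)
    (hτ : ∀ t ∈ Set.Icc (0 : ℝ) T, c * τ t = |x t + x (t - τ t)|)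
    (hode : ∀ t ∈ Set.Ioo (0 : ℝ) T,
      HasDerivAt x (-(ψ (|x t + x (t - τ t)|) * (x t + x (t - τ t)))) t)
    (hlip : ∀ a b, a ∈ Set.Icc (-S0) T → b ∈ Set.Icc (-S0) T →
      |x a - x b| ≤ s * |a - b|) :
    AntitoneOn (fun t => x t ^ 2) (Set.Icc 0 T) ∧
      ∀ t ∈ Set.Icc (0 : ℝ) T, |x t| ≤ |x 0| :=
  stmt_7_general c s S0 T hs hsc hS0 ψ hψnn x τ hτ0 hdom hτ hode hlip
end

section
/- Let x₁, …, x_N : [0,∞) → ℝ be solutions of an ODE system with the uniqueness-of-solutions property that whenever x_i(T) = x_j(T) for some T ≥ 0 and i ≠ j, then x_i(t) = x_j(t) for all t ≥ T. If x₁(0) ≤ x₂(0) ≤ … ≤ x_N(0), then x₁(t) ≤ x₂(t) ≤ … ≤ x_N(t) for all t ≥ 0. -/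
/-! If the ordering of two trajectories were ever reversed, the intermediate value theorem would
give an earlier collision time; after it the trajectories coincide, contradicting the reversal. -/

open Set

theorem ContinuousOn.le_of_le_of_coalesce {X α : Type*} [ConditionallyCompleteLinearOrder X]
    [DenselyOrdered X] [TopologicalSpace X] [OrderTopology X] [LinearOrder α] [TopologicalSpace α]
    [OrderClosedTopology α] {f g : X → α} {a : X}
    (hf : ContinuousOn f (Ici a)) (hg : ContinuousOn g (Ici a)) (ha : f a ≤ g a)
    (hcoalesce : ∀ T, a ≤ T → f T = g T → ∀ t, T ≤ t → f t = g t) :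
    ∀ t, a ≤ t → f t ≤ g t := by
  intro t hat
  by_contra! hgt
  obtain ⟨s, ⟨has, hst⟩, hfs⟩ :=
    isPreconnected_Icc.intermediate_value₂ (left_mem_Icc.2 hat) (right_mem_Icc.2 hat)
      (hf.mono Icc_subset_Ici_self) (hg.mono Icc_subset_Ici_self) ha hgt.le
  exact hgt.ne' (hcoalesce s has hfs t hst)

/-- Order preservation for 1D trajectories that coalesce upon collision:
if trajectories are continuous, stick together after any collision, and are
initially ordered, then the ordering is preserved for all t ≥ 0. -/
theorem stmt_9 (N : ℕ) (x : Fin N → ℝ → ℝ)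
    (hcont : ∀ i : Fin N, ContinuousOn (x i) (Set.Ici 0))
    (hstick : ∀ (i j : Fin N) (T : ℝ), i ≠ j → 0 ≤ T → x i T = x j T →
      ∀ t : ℝ, T ≤ t → x i t = x j t)
    (hinit : ∀ i j : Fin N, i ≤ j → x i 0 ≤ x j 0) :
    ∀ t : ℝ, 0 ≤ t → ∀ i j : Fin N, i ≤ j → x i t ≤ x j t := by
  intro t ht i j hij
  rcases eq_or_ne i j with rfl | hne
  · exact le_rfl
  · exact (hcont i).le_of_le_of_coalesce (hcont j) (hinit i j hij)
      (fun T hT hcollide => hstick i j T hne hT hcollide) t ht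
end

section
/- Let c > s > 0 and N ≥ 2. Suppose x₁, …, x_N : (-∞, ∞) → ℝ are uniformly Lipschitz with constant s, ordered so that x₁(t) ≤ x_j(t) ≤ x_N(t) for all j and all t ≥ 0, and satisfy ẋ₁(t) = (1/(N-1))·Σ_{j=1}^N ψ(|x̃_j(t) - x₁(t)|)·(x̃_j(t) - x₁(t)) where x̃_j(t) = x_j(t - τ_{1j}(t)) and τ_{1j}(t) ≥ 0 solves c·τ_{1j}(t) = |x₁(t) - x_j(t - τ_{1j}(t))|, with ψ ≥ 0. Then ẋ₁(t) ≥ 0 for all t ≥ 0. Symmetrically, ẋ_N(t) ≤ 0 for all t ≥ 0. -/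
/-!
An agent moving at speed at most `s < c` never outruns the signals it emits. So if agent `j`
is to the right of agent `1` now, the position of `j` that agent `1` currently observes is still
to its right: otherwise the signal would have covered the gap `c τ` in time `τ` while `j`
covered more than that distance. Every summand of `ẋ₁` is therefore nonnegative; the rightmost
agent is the mirror image.
-/

theorem le_apply_sub_delay_of_le {f : ℝ → ℝ} {s c τ a t : ℝ} (hsc : s < c)
    (hlip : ∀ u v, |f u - f v| ≤ s * |u - v|) (hτ0 : 0 ≤ τ) (hτ : c * τ = |a - f (t - τ)|)
    (ha : a ≤ f t) : a ≤ f (t - τ) := by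
  by_contra! hlt
  have hcs : c * τ ≤ s * τ := calc
    c * τ = a - f (t - τ) := by rw [hτ, abs_of_pos (sub_pos.2 hlt)]
    _ ≤ |f t - f (t - τ)| := by linarith [le_abs_self (f t - f (t - τ))]
    _ ≤ s * |t - (t - τ)| := hlip _ _
    _ = s * τ := by rw [sub_sub_cancel, abs_of_nonneg hτ0]
  obtain rfl : τ = 0 := by nlinarith
  rw [sub_zero] at hlt
  exact hlt.not_ge ha

theorem apply_sub_delay_le_of_le {f : ℝ → ℝ} {s c τ a t : ℝ} (hsc : s < c)
    (hlip : ∀ u v, |f u - f v| ≤ s * |u - v|) (hτ0 : 0 ≤ τ) (hτ : c * τ = |a - f (t - τ)|)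
    (ha : f t ≤ a) : f (t - τ) ≤ a := by
  have hlip' : ∀ u v, |-f u - -f v| ≤ s * |u - v| := fun u v => by
    rw [← abs_neg, neg_sub_neg, neg_sub]
    exact hlip u v
  have hτ' : c * τ = |-a - -f (t - τ)| := by rw [neg_sub_neg, abs_sub_comm, hτ]
  exact neg_le_neg_iff.1 (le_apply_sub_delay_of_le hsc hlip' hτ0 hτ' (neg_le_neg ha))

/-- In the 1D Hegselmann-Krause model with finite propagation speed c > s, the
leftmost agent moves right and the rightmost agent moves left: ẋ₁ ≥ 0, ẋ_N ≤ 0. -/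
theorem stmt_10 (c s : ℝ) (hsc : s < c) (N : ℕ) (hN : 2 ≤ N)
    (ψ : ℝ → ℝ) (hψnn : ∀ r : ℝ, 0 ≤ ψ r)
    (x : Fin N → ℝ → ℝ) (τ : Fin N → Fin N → ℝ → ℝ)
    (hlip : ∀ (i : Fin N) (a b : ℝ), |x i a - x i b| ≤ s * |a - b|)
    (hτ0 : ∀ (i j : Fin N) (t : ℝ), 0 ≤ τ i j t)
    (hτ : ∀ (i j : Fin N) (t : ℝ), c * τ i j t = |x i t - x j (t - τ i j t)|)
    (hode : ∀ (i : Fin N) (t : ℝ), 0 ≤ t →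
      HasDerivAt (x i)
        (((N : ℝ) - 1)⁻¹ * ∑ j : Fin N,
          ψ (|x j (t - τ i j t) - x i t|) * (x j (t - τ i j t) - x i t)) t)
    (horder : ∀ (j : Fin N) (t : ℝ), 0 ≤ t →
      x ⟨0, by omega⟩ t ≤ x j t ∧ x j t ≤ x ⟨N - 1, by omega⟩ t) :
    ∀ t : ℝ, 0 ≤ t →
      0 ≤ deriv (x ⟨0, by omega⟩) t ∧ deriv (x ⟨N - 1, by omega⟩) t ≤ 0 := by
  intro t ht
  have hweight : (0 : ℝ) ≤ ((N : ℝ) - 1)⁻¹ := by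
    have : (2 : ℝ) ≤ N := by exact_mod_cast hN
    exact inv_nonneg.2 (by linarith)
  constructor
  · rw [(hode _ t ht).deriv]
    refine mul_nonneg hweight (Finset.sum_nonneg fun j _ => mul_nonneg (hψnn _) ?_)
    exact sub_nonneg.2 <| le_apply_sub_delay_of_le hsc (hlip j) (hτ0 _ j t) (hτ _ j t)
      (horder j t ht).1
  · rw [(hode _ t ht).deriv]
    refine mul_nonpos_of_nonneg_of_nonpos hweight
      (Finset.sum_nonpos fun j _ => mul_nonpos_of_nonneg_of_nonpos (hψnn _) ?_)
    exact sub_nonpos.2 <| apply_sub_delay_le_of_le hsc (hlip j) (hτ0 _ j t) (hτ _ j t)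
      (horder j t ht).2
end

section
/- Let c > s > 0, N ≥ 2, and let ψ : [0,∞) → [0,∞). Let x₁,…,x_N : ℝ → ℝ^d be uniformly Lipschitz with constant s, solving on (0,∞) the system ẋ_i(t) = (1/(N-1))·Σ_j ψ(|x̃_j^{(i)}(t) - x_i(t)|)·(x̃_j^{(i)}(t) - x_i(t)), where x̃_j^{(i)}(t) = x_j(t - τ_{ij}(t)) and c·τ_{ij}(t) = |x_i(t) - x_j(t - τ_{ij}(t))|. Suppose ψ̲ ≤ ψ(r) ≤ ψ̄ for all r in a range containing all arguments arising along the solution, with 0 < ψ̲ ≤ ψ̄. If at time t the diameter d_x(t) = max_{j,l}|x_j(t) - x_l(t)| is attained by the pair (i,k) and d_x is differentiable at t, then d/dt d_x(t) ≤ [2s·ψ̄/(c - s) - N·ψ̲/(N - 1)]·d_x(t). -/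
/-! At a time where the diameter is attained by `(i, k)`, `d_x ^ 2` touches `‖x_i - x_k‖ ^ 2`
from above, so `d_x * d_x' = ⟪x_i - x_k, ẋ_i - ẋ_k⟫`. Each summand of `ẋ_i` splits into a delay
error `x̃_j^{(i)} - x_j`, of size at most `s / (c - s) * ‖x_i - x_j‖` because the signal travels at
speed `c` while its source moves at speed at most `s`, and an attraction term `x_j - x_i`, which
makes an obtuse angle with `x_i - x_k` since `(i, k)` is a diametral pair. Over both agents `i`
and `k` the attraction terms sum to `-N * d_x ^ 2`. -/

open RealInnerProductSpace Finset

section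

variable {E : Type*} [NormedAddCommGroup E]

/-- `y` is where a source moving at speed at most `s` was when it emitted a signal of speed `c`
that reaches `p` after time `τ`; `q` is where the source is at reception. -/
theorem norm_sub_le_div_mul_of_delay {p q y : E} {c s τ : ℝ} (hs : 0 ≤ s) (hsc : s < c)
    (hτ : c * τ = ‖p - y‖) (hy : ‖y - q‖ ≤ s * τ) : ‖y - q‖ ≤ s / (c - s) * ‖p - q‖ := by
  have hcs : 0 < c - s := sub_pos.mpr hsc
  have hτle : (c - s) * τ ≤ ‖p - q‖ := by
    have := norm_sub_le_norm_sub_add_norm_sub p q y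
    rw [norm_sub_rev q y] at this
    linarith
  calc ‖y - q‖ ≤ s * τ := hy
    _ ≤ s * (‖p - q‖ / (c - s)) := by
      gcongr
      rwa [le_div_iff₀ hcs, mul_comm]
    _ = s / (c - s) * ‖p - q‖ := by ring

variable {ι : Type*}

theorem norm_delayed_sub_le {x : ι → ℝ → E} {τ : ι → ι → ℝ → ℝ} {c s u : ℝ} {i j : ι}
    (hs : 0 ≤ s) (hsc : s < c)
    (hlip : ∀ j a b, ‖x j a - x j b‖ ≤ s * |a - b|) (hτ0 : 0 ≤ τ i j u)
    (hτ : c * τ i j u = ‖x i u - x j (u - τ i j u)‖) :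
    ‖x j (u - τ i j u) - x j u‖ ≤ s / (c - s) * ‖x i u - x j u‖ := by
  refine norm_sub_le_div_mul_of_delay hs hsc hτ ?_
  simpa [abs_of_nonneg hτ0] using hlip j (u - τ i j u) u

variable [Fintype ι]

theorem sum_norm_sub_le_card_sub_one_mul (f : ι → E) (a : ι) {d : ℝ}
    (h : ∀ j, ‖f a - f j‖ ≤ d) : ∑ j, ‖f a - f j‖ ≤ (Fintype.card ι - 1) * d := by
  classical
  rw [← sum_erase univ (f := fun j => ‖f a - f j‖) (by rw [sub_self, norm_zero])]
  calc ∑ j ∈ univ.erase a, ‖f a - f j‖ ≤ (univ.erase a).card • d :=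
        sum_le_card_nsmul _ _ _ fun j _ => h j
    _ = (Fintype.card ι - 1) * d := by
      rw [card_erase_of_mem (mem_univ a), card_univ, nsmul_eq_mul,
        Nat.cast_pred (Fintype.card_pos_iff.mpr ⟨a⟩)]

variable [InnerProductSpace ℝ E]

theorem inner_sub_nonpos_of_norm_sub_le {a b z : E} (h : ‖z - b‖ ≤ ‖a - b‖) :
    ⟪z - a, a - b⟫ ≤ 0 := by
  have hsplit : ⟪z - a, a - b⟫ = ⟪z - b, a - b⟫ - ‖a - b‖ ^ 2 := by
    rw [← real_inner_self_eq_norm_sq, ← inner_sub_left, sub_sub_sub_cancel_right]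
  nlinarith [real_inner_le_norm (z - b) (a - b), norm_nonneg (a - b)]

theorem mul_inner_sub_le_of_norm_sub_le {a b q y : E} {r lo hi : ℝ} (hlo : 0 ≤ lo)
    (hr : lo ≤ r) (hr' : r ≤ hi) (hq : ‖q - b‖ ≤ ‖a - b‖) :
    r * ⟪y - a, a - b⟫ ≤ hi * (‖y - q‖ * ‖a - b‖) + lo * ⟪q - a, a - b⟫ := by
  have hsplit : ⟪y - a, a - b⟫ = ⟪y - q, a - b⟫ + ⟪q - a, a - b⟫ := by
    rw [← inner_add_left, sub_add_sub_cancel]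
  have hdelay : r * ⟪y - q, a - b⟫ ≤ hi * (‖y - q‖ * ‖a - b‖) :=
    calc r * ⟪y - q, a - b⟫ ≤ r * (‖y - q‖ * ‖a - b‖) := by
          gcongr
          · linarith
          · exact real_inner_le_norm _ _
      _ ≤ hi * (‖y - q‖ * ‖a - b‖) := by gcongr
  have hattract : r * ⟪q - a, a - b⟫ ≤ lo * ⟪q - a, a - b⟫ :=
    mul_le_mul_of_nonpos_right hr (inner_sub_nonpos_of_norm_sub_le hq)
  rw [hsplit, mul_add]
  exact add_le_add hdelay hattract

theorem sum_inner_sub_add_sum_inner_sub (f : ι → E) (a b : E) :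
    ∑ j, ⟪f j - a, a - b⟫ + ∑ j, ⟪f j - b, b - a⟫ = -(Fintype.card ι * ‖a - b‖ ^ 2) := by
  have h : ∀ j, ⟪f j - a, a - b⟫ + ⟪f j - b, b - a⟫ = -‖a - b‖ ^ 2 := by
    intro j
    rw [← neg_sub a b, inner_neg_right, ← sub_eq_add_neg, ← inner_sub_left,
      sub_sub_sub_cancel_left, ← neg_sub a b, inner_neg_left, real_inner_self_eq_norm_sq]
  rw [← sum_add_distrib, sum_congr rfl fun j _ => h j, sum_const, card_univ, nsmul_eq_mul]
  ring

theorem inner_smul_sum_smul (w : E) (r : ℝ) (g : ι → ℝ) (z : ι → E) :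
    ⟪w, r • ∑ j, g j • z j⟫ = r * ∑ j, g j * ⟪z j, w⟫ := by
  simp only [real_inner_smul_right, inner_sum, real_inner_comm w]

theorem HasDerivAt.mul_eq_inner_of_norm_le {f : ℝ → ℝ} {w : ℝ → E} {f' t : ℝ} {w' : E}
    (hle : ∀ u, ‖w u‖ ≤ f u) (heq : f t = ‖w t‖) (hf : HasDerivAt f f' t)
    (hw : HasDerivAt w w' t) : f t * f' = ⟪w t, w'⟫ := by
  have hmin : IsLocalMin (fun u => f u ^ 2 - ‖w u‖ ^ 2) t :=
    Filter.Eventually.of_forall fun u => by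
      have := pow_le_pow_left₀ (norm_nonneg _) (hle u) 2
      simp only [heq, sub_self]
      linarith
  have := hmin.hasDerivAt_eq_zero ((hf.pow 2).sub hw.norm_sq)
  simp only [Nat.cast_ofNat, Nat.add_one_sub_one, pow_one] at this
  linarith

/-- The summand `j = a` carries no delay error, which is where `card ι - 1` comes from. -/
theorem sum_inner_drift_le {x : ι → ℝ → E} {τ : ι → ι → ℝ → ℝ} {ψ : ℝ → ℝ} {c s lo hi u : ℝ}
    {a b : ι} (hs : 0 ≤ s) (hsc : s < c) (hlo : 0 ≤ lo) (hψ : ∀ r, 0 ≤ r → lo ≤ ψ r ∧ ψ r ≤ hi)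
    (hlip : ∀ j a b, ‖x j a - x j b‖ ≤ s * |a - b|) (hτ0 : ∀ j, 0 ≤ τ a j u)
    (hτ : ∀ j, c * τ a j u = ‖x a u - x j (u - τ a j u)‖)
    (hdiam : ∀ j l, ‖x j u - x l u‖ ≤ ‖x a u - x b u‖) :
    ∑ j, ψ ‖x j (u - τ a j u) - x a u‖ * ⟪x j (u - τ a j u) - x a u, x a u - x b u⟫ ≤
      (Fintype.card ι - 1) * (hi * (s / (c - s)) * ‖x a u - x b u‖ ^ 2) +
        lo * ∑ j, ⟪x j u - x a u, x a u - x b u⟫ := by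
  set d := ‖x a u - x b u‖
  have hhi : 0 ≤ hi := hlo.trans ((hψ 0 le_rfl).1.trans (hψ 0 le_rfl).2)
  have hterm : ∀ j, ψ ‖x j (u - τ a j u) - x a u‖ *
      ⟪x j (u - τ a j u) - x a u, x a u - x b u⟫ ≤
        hi * (‖x j (u - τ a j u) - x j u‖ * d) + lo * ⟪x j u - x a u, x a u - x b u⟫ :=
    fun j => mul_inner_sub_le_of_norm_sub_le hlo (hψ _ (norm_nonneg _)).1
      (hψ _ (norm_nonneg _)).2 (hdiam j b)
  have hdelay : ∑ j, ‖x j (u - τ a j u) - x j u‖ ≤ s / (c - s) * ((Fintype.card ι - 1) * d) :=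
    calc ∑ j, ‖x j (u - τ a j u) - x j u‖ ≤ ∑ j, s / (c - s) * ‖x a u - x j u‖ :=
          sum_le_sum fun j _ => norm_delayed_sub_le hs hsc hlip (hτ0 j) (hτ j)
      _ = s / (c - s) * ∑ j, ‖x a u - x j u‖ := (mul_sum _ _ _).symm
      _ ≤ s / (c - s) * ((Fintype.card ι - 1) * d) := by
        have : 0 ≤ s / (c - s) := div_nonneg hs (sub_pos.mpr hsc).le
        gcongr
        exact sum_norm_sub_le_card_sub_one_mul (fun j => x j u) a fun j => hdiam a j
  calc _ ≤ ∑ j, (hi * (‖x j (u - τ a j u) - x j u‖ * d) +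
          lo * ⟪x j u - x a u, x a u - x b u⟫) := sum_le_sum fun j _ => hterm j
    _ = hi * d * ∑ j, ‖x j (u - τ a j u) - x j u‖ +
          lo * ∑ j, ⟪x j u - x a u, x a u - x b u⟫ := by
      rw [sum_add_distrib, ← mul_sum, ← mul_sum, ← sum_mul]
      ring
    _ ≤ _ := by
      have : 0 ≤ hi * d := mul_nonneg hhi (norm_nonneg _)
      gcongr ?_ + _
      calc hi * d * ∑ j, ‖x j (u - τ a j u) - x j u‖
          ≤ hi * d * (s / (c - s) * ((Fintype.card ι - 1) * d)) := by gcongr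
        _ = _ := by ring

end

theorem stmt_16_general (dim : ℕ) (c s : ℝ) (hs : 0 < s) (hsc : s < c)
    (N : ℕ) (hN : 2 ≤ N)
    (ψ : ℝ → ℝ) (ψlo ψhi : ℝ) (hψlo : 0 < ψlo)
    (hψbounds : ∀ r : ℝ, 0 ≤ r → ψlo ≤ ψ r ∧ ψ r ≤ ψhi)
    (x : Fin N → ℝ → EuclideanSpace ℝ (Fin dim))
    (τ : Fin N → Fin N → ℝ → ℝ)
    (hlip : ∀ (i : Fin N) (a b : ℝ), ‖x i a - x i b‖ ≤ s * |a - b|)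
    (hτ0 : ∀ (i j : Fin N) (u : ℝ), 0 ≤ τ i j u)
    (hτ : ∀ (i j : Fin N) (u : ℝ), c * τ i j u = ‖x i u - x j (u - τ i j u)‖)
    (hode : ∀ (i : Fin N) (u : ℝ), 0 < u →
      HasDerivAt (x i)
        (((N : ℝ) - 1)⁻¹ • ∑ j : Fin N,
          ψ (‖x j (u - τ i j u) - x i u‖) • (x j (u - τ i j u) - x i u)) u)
    (dx : ℝ → ℝ)
    (hdx : ∀ u : ℝ, dx u = ⨆ p : Fin N × Fin N, ‖x p.1 u - x p.2 u‖)
    (t : ℝ) (ht : 0 < t) (i k : Fin N)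
    (hattain : dx t = ‖x i t - x k t‖)
    (D : ℝ) (hD : HasDerivAt dx D t) :
    D ≤ (2 * s * ψhi / (c - s) - (N : ℝ) * ψlo / ((N : ℝ) - 1)) * dx t := by
  have hN1 : (0 : ℝ) < N - 1 := by
    have : (2 : ℝ) ≤ N := by exact_mod_cast hN
    linarith
  have hle : ∀ j l u, ‖x j u - x l u‖ ≤ dx u := fun j l u =>
    hdx u ▸ le_ciSup (Finite.bddAbove_range fun p : Fin N × Fin N => ‖x p.1 u - x p.2 u‖) (j, l)
  have hdiam : ∀ j l, ‖x j t - x l t‖ ≤ ‖x i t - x k t‖ := hattain ▸ fun j l => hle j l t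
  rcases (norm_nonneg _).trans_eq hattain.symm |>.eq_or_lt with hzero | hpos
  · have hmin : IsLocalMin dx t := Filter.Eventually.of_forall fun u =>
      hzero ▸ (norm_nonneg _).trans (hle i i u)
    rw [hmin.hasDerivAt_eq_zero hD, ← hzero, mul_zero]
  have hderiv := hD.mul_eq_inner_of_norm_le (hle i k) hattain ((hode i t ht).sub (hode k t ht))
  have hi := sum_inner_drift_le hs.le hsc hψlo.le hψbounds hlip (hτ0 i · t) (hτ i · t) hdiam
  have hk := sum_inner_drift_le hs.le hsc hψlo.le hψbounds hlip (hτ0 k · t) (hτ k · t)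
    (by simpa only [norm_sub_rev (x i t)] using hdiam)
  have hsum := sum_inner_sub_add_sum_inner_sub (fun j => x j t) (x i t) (x k t)
  rw [inner_sub_right, inner_smul_sum_smul, inner_smul_sum_smul] at hderiv
  simp only [Fintype.card_fin, norm_sub_rev (x k t), ← hattain] at hi hk hsum
  simp only [← neg_sub (x i t) (x k t), inner_neg_right, mul_neg, sum_neg_distrib] at hk hsum
  refine le_of_mul_le_mul_left ?_ hpos
  rw [hderiv]
  have hinv : ((N : ℝ) - 1)⁻¹ * (N - 1) = 1 := inv_mul_cancel₀ hN1.ne'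
  linear_combination (N - 1 : ℝ)⁻¹ * (hi + hk + ψlo * hsum) +
    2 * ψhi * (s / (c - s)) * dx t ^ 2 * hinv

/-- Diameter contraction estimate for the multidimensional Hegselmann-Krause model
with finite speed of information propagation: if the diameter d_x is attained at
time t > 0 by the pair (i,k) and is differentiable at t, then
d/dt d_x(t) ≤ [2s·ψ̄/(c-s) - N·ψ̲/(N-1)]·d_x(t). -/
theorem stmt_16 (dim : ℕ) (c s : ℝ) (hs : 0 < s) (hsc : s < c)
    (N : ℕ) (hN : 2 ≤ N)
    (ψ : ℝ → ℝ) (ψlo ψhi : ℝ) (hψlo : 0 < ψlo) (hψlohi : ψlo ≤ ψhi)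
    (hψbounds : ∀ r : ℝ, 0 ≤ r → ψlo ≤ ψ r ∧ ψ r ≤ ψhi)
    (x : Fin N → ℝ → EuclideanSpace ℝ (Fin dim))
    (τ : Fin N → Fin N → ℝ → ℝ)
    (hlip : ∀ (i : Fin N) (a b : ℝ), ‖x i a - x i b‖ ≤ s * |a - b|)
    (hτ0 : ∀ (i j : Fin N) (u : ℝ), 0 ≤ τ i j u)
    (hτ : ∀ (i j : Fin N) (u : ℝ), c * τ i j u = ‖x i u - x j (u - τ i j u)‖)
    (hode : ∀ (i : Fin N) (u : ℝ), 0 < u →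
      HasDerivAt (x i)
        (((N : ℝ) - 1)⁻¹ • ∑ j : Fin N,
          ψ (‖x j (u - τ i j u) - x i u‖) • (x j (u - τ i j u) - x i u)) u)
    (dx : ℝ → ℝ)
    (hdx : ∀ u : ℝ, dx u = ⨆ p : Fin N × Fin N, ‖x p.1 u - x p.2 u‖)
    (t : ℝ) (ht : 0 < t) (i k : Fin N)
    (hattain : dx t = ‖x i t - x k t‖)
    (D : ℝ) (hD : HasDerivAt dx D t) :
    D ≤ (2 * s * ψhi / (c - s) - (N : ℝ) * ψlo / ((N : ℝ) - 1)) * dx t :=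
  stmt_16_general dim c s hs hsc N hN ψ ψlo ψhi hψlo hψbounds x τ hlip hτ0 hτ hode dx hdx t ht i k
    hattain D hD
end

section
/- Let c > s > 0 and suppose trajectories x_j : (-∞, t] → ℝ^d are uniformly Lipschitz with constant s for j = 1, …, N, and satisfy |x_j(σ)| ≤ R for all σ ≤ t and all j. Fix i and let τ_{ij} ≥ 0 solve c·τ_{ij} = |x_i(t) - x_j(t - τ_{ij})|. If |x_i(t)| = R and x_j(t - τ_{ij})·x_i(t) = |x_i(t)|² for all j ∈ {1,…,N}, then τ_{ij} = 0 and x_j(t) = x_i(t) for all j. -/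
theorem eq_of_norm_le_of_inner_eq_norm_sq {F : Type*} [NormedAddCommGroup F]
    [InnerProductSpace ℝ F] {x y : F} (hy : ‖y‖ ≤ ‖x‖) (h : inner ℝ y x = ‖x‖ ^ 2) :
    y = x := by
  -- ‖x - y‖² = ‖y‖² - ‖x‖² once ⟪x, y⟫ = ‖x‖²
  have hsq : ‖x - y‖ ^ 2 ≤ 0 := by
    rw [norm_sub_sq_real, real_inner_comm, h]
    nlinarith [norm_nonneg y]
  exact (sub_eq_zero.mp (norm_eq_zero.mp (by nlinarith [norm_nonneg (x - y)]))).symm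

theorem stmt_18_general (d : ℕ) (c s t R : ℝ) (hs : 0 < s) (hsc : s < c)
    (N : ℕ) (x : Fin N → ℝ → EuclideanSpace ℝ (Fin d))
    (hR : ∀ (j : Fin N) (σ : ℝ), σ ≤ t → ‖x j σ‖ ≤ R)
    (i : Fin N) (τ : Fin N → ℝ)
    (hτ0 : ∀ j : Fin N, 0 ≤ τ j)
    (hτ : ∀ j : Fin N, c * τ j = ‖x i t - x j (t - τ j)‖)
    (hnorm : ‖x i t‖ = R)
    (hinner : ∀ j : Fin N, (inner ℝ (x j (t - τ j)) (x i t) : ℝ) = ‖x i t‖ ^ 2) :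
    ∀ j : Fin N, τ j = 0 ∧ x j t = x i t := by
  intro j
  have hdelayed : x j (t - τ j) = x i t :=
    eq_of_norm_le_of_inner_eq_norm_sq
      (hnorm ▸ hR j _ (sub_le_self t (hτ0 j))) (hinner j)
  have hτj : τ j = 0 := by
    have hc : c ≠ 0 := (hs.trans hsc).ne'
    simpa [hdelayed, hc] using hτ j
  exact ⟨hτj, by simpa [hτj] using hdelayed⟩

/-- Rigidity in the proof that the group radius is non-increasing: if all
trajectories stay in the ball of radius R up to time t, |x_i(t)| = R, and every
delayed position satisfies x_j(t-τ_{ij})·x_i(t) = |x_i(t)|², then all delays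
vanish and all agents coincide with x_i at time t. -/
theorem stmt_18 (d : ℕ) (c s t R : ℝ) (hs : 0 < s) (hsc : s < c)
    (N : ℕ) (x : Fin N → ℝ → EuclideanSpace ℝ (Fin d))
    (hlip : ∀ (j : Fin N) (a b : ℝ), a ≤ t → b ≤ t → ‖x j a - x j b‖ ≤ s * |a - b|)
    (hR : ∀ (j : Fin N) (σ : ℝ), σ ≤ t → ‖x j σ‖ ≤ R)
    (i : Fin N) (τ : Fin N → ℝ)
    (hτ0 : ∀ j : Fin N, 0 ≤ τ j)
    (hτ : ∀ j : Fin N, c * τ j = ‖x i t - x j (t - τ j)‖)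
    (hnorm : ‖x i t‖ = R)
    (hinner : ∀ j : Fin N, (inner ℝ (x j (t - τ j)) (x i t) : ℝ) = ‖x i t‖ ^ 2) :
    ∀ j : Fin N, τ j = 0 ∧ x j t = x i t :=
  stmt_18_general d c s t R hs hsc N x hR i τ hτ0 hτ hnorm hinner
end
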